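/- arXiv:1706.09998 — 5 statements merged into one kernel-verified Lean document; each statement's English description precedes it below -/
import Mathlib

section
/- Let x₁, …, xₙ be points in a real inner product space, let λ > 0, and let S be the n × n matrix with entries S_{ij} = e^{-λ² ‖xᵢ - xⱼ‖²}. Then S is positive semidefinite: for every vector Λ = (λ₁, …, λₙ) ∈ ℝⁿ, we have Λ S Λᵀ ≥ 0. -/
/-!
Expanding the square, exp(-c‖xᵢ - xⱼ‖²) = dᵢ · exp(2c⟪xᵢ, xⱼ⟫) · dⱼ with dᵢ = exp(-c‖xᵢ‖²), so
the Gaussian matrix is a diagonal congruence of the entrywise exponential of the positive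
semidefinite Gram matrix 2c(⟪xᵢ, xⱼ⟫). By the Schur product theorem entrywise powers of a
positive semidefinite matrix stay positive semidefinite, hence so does the entrywise value of
any power series with nonnegative coefficients, such as exp.
-/

theorem exp_neg_mul_norm_sub_sq {E : Type*} [NormedAddCommGroup E] [InnerProductSpace ℝ E]
    (c : ℝ) (x y : E) :
    Real.exp (-c * ‖x - y‖ ^ 2) =
      Real.exp (-c * ‖x‖ ^ 2) * Real.exp (2 * c * inner ℝ x y) * Real.exp (-c * ‖y‖ ^ 2) := by
  rw [← Real.exp_add, ← Real.exp_add, norm_sub_sq_real]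
  ring_nf

namespace Matrix

variable {ι : Type*} [Fintype ι]

open scoped ComplexOrder Nat

theorem PosSemidef.map_pow {𝕜 : Type*} [RCLike 𝕜] {A : Matrix ι ι 𝕜} (hA : A.PosSemidef)
    (k : ℕ) : (A.map (· ^ k)).PosSemidef := by
  induction k with
  | zero =>
    have : A.map (· ^ 0) = vecMulVec 1 (star 1) := by ext; simp [vecMulVec]
    exact this ▸ posSemidef_vecMulVec_self_star 1
  | succ k ih =>
    have : A.map (· ^ (k + 1)) = A.map (· ^ k) ⊙ A := by ext; simp [pow_succ]
    exact this ▸ ih.hadamard hA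

theorem PosSemidef.map_of_hasSum {A : Matrix ι ι ℝ} (hA : A.PosSemidef) {f : ℝ → ℝ}
    {c : ℕ → ℝ} (hc : ∀ k, 0 ≤ c k) (hf : ∀ t, HasSum (fun k ↦ c k * t ^ k) (f t)) :
    (A.map f).PosSemidef := by
  refine .of_dotProduct_mulVec_nonneg (hA.isHermitian.map f fun _ ↦ rfl) fun v ↦ ?_
  have hsum : HasSum (fun k ↦ c k * (star v ⬝ᵥ A.map (· ^ k) *ᵥ v)) (star v ⬝ᵥ A.map f *ᵥ v) := by
    simp only [dotProduct, mulVec, Finset.mul_sum, map_apply]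
    refine hasSum_sum fun i _ ↦ hasSum_sum fun j _ ↦ ?_
    rw [show star v i * (f (A i j) * v j) = star v i * v j * f (A i j) by ring]
    exact ((hf (A i j)).mul_left (star v i * v j)).congr_fun fun k ↦ by ring
  exact hsum.nonneg fun k ↦ mul_nonneg (hc k) ((hA.map_pow k).dotProduct_mulVec_nonneg v)

theorem PosSemidef.map_exp {A : Matrix ι ι ℝ} (hA : A.PosSemidef) :
    (A.map Real.exp).PosSemidef :=
  hA.map_of_hasSum (c := fun k ↦ (k ! : ℝ)⁻¹) (fun k ↦ by positivity) fun t ↦ by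
    simpa [Real.exp_eq_exp_ℝ, div_eq_inv_mul] using NormedSpace.expSeries_div_hasSum_exp t

theorem posSemidef_gaussianKernel {E : Type*} [NormedAddCommGroup E]
    [InnerProductSpace ℝ E] (x : ι → E) {c : ℝ} (hc : 0 ≤ c) :
    (of fun i j ↦ Real.exp (-c * ‖x i - x j‖ ^ 2)).PosSemidef := by
  classical
  let d := diagonal fun i ↦ Real.exp (-c * ‖x i‖ ^ 2)
  have hexp : (((2 * c) • gram ℝ x).map Real.exp).PosSemidef :=
    ((posSemidef_gram ℝ x).smul (by positivity)).map_exp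
  convert hexp.conjTranspose_mul_mul_same d using 1
  ext i j
  simp only [d, of_apply, exp_neg_mul_norm_sub_sq c (x i), diagonal_conjTranspose, diagonal_mul,
    mul_diagonal, map_apply, smul_apply, gram_apply, smul_eq_mul, star_trivial]

end Matrix

theorem gaussian_kernel_posSemidef_general {E : Type*} [NormedAddCommGroup E] [InnerProductSpace ℝ E]
    (n : ℕ) (x : Fin n → E) (lam : ℝ) (Λ : Fin n → ℝ) :
    0 ≤ ∑ i, ∑ j, Λ i * Λ j * Real.exp (-(lam ^ 2) * ‖x i - x j‖ ^ 2) := by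
  have h := (Matrix.posSemidef_gaussianKernel x (sq_nonneg lam)).dotProduct_mulVec_nonneg Λ
  simpa [dotProduct, Matrix.mulVec, Finset.mul_sum, mul_comm, mul_left_comm, mul_assoc] using h

/-- The Gaussian kernel is positive semidefinite on any real inner product space. -/
theorem gaussian_kernel_posSemidef {E : Type*} [NormedAddCommGroup E] [InnerProductSpace ℝ E]
    (n : ℕ) (x : Fin n → E) (lam : ℝ) (hlam : 0 < lam) (Λ : Fin n → ℝ) :
    0 ≤ ∑ i, ∑ j, Λ i * Λ j * Real.exp (-(lam ^ 2) * ‖x i - x j‖ ^ 2) :=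
  gaussian_kernel_posSemidef_general n x lam Λ
end

section
/- Points x₁, …, x_l ∈ ℝ^m are affinely dependent (not in general position) if and only if there exists a nonzero vector Λ = (λ₁, …, λ_l) ∈ ℝⁿ with Σᵢ λᵢ = 0 and Λ D Λᵀ = 0, where D is the l × l matrix with D_{ij} = ‖xᵢ - xⱼ‖². -/
open Finset

theorem not_affineIndependent_iff_exists_sum_smul_eq_zero {k V ι : Type*} [Ring k]
    [AddCommGroup V] [Module k V] [Fintype ι] (p : ι → V) :
    ¬ AffineIndependent k p ↔ ∃ w : ι → k, w ≠ 0 ∧ ∑ i, w i = 0 ∧ ∑ i, w i • p i = 0 := by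
  simp only [affineIndependent_iff_of_fintype, not_forall, exists_prop, Function.ne_iff]
  refine exists_congr fun w => ?_
  constructor
  · rintro ⟨hw, hp, hne⟩
    exact ⟨hne, hw, (univ.weightedVSub_eq_linear_combination hw).symm.trans hp⟩
  · rintro ⟨hne, hw, hp⟩
    exact ⟨hw, (univ.weightedVSub_eq_linear_combination hw).trans hp, hne⟩

theorem sum_sum_mul_norm_sub_sq_of_sum_eq_zero {F ι : Type*} [NormedAddCommGroup F]
    [InnerProductSpace ℝ F] {s : Finset ι} {w : ι → ℝ} (v : ι → F) (hw : ∑ i ∈ s, w i = 0) :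
    ∑ i ∈ s, ∑ j ∈ s, w i * w j * ‖v i - v j‖ ^ 2 = -2 * ‖∑ i ∈ s, w i • v i‖ ^ 2 := by
  have h := inner_sum_smul_sum_smul_of_sum_eq_zero v hw v hw
  rw [real_inner_self_eq_norm_sq] at h
  simp only [sq] at h ⊢
  linarith

/-- Points in `ℝ^m` are affinely dependent iff some nonzero vector of coefficients
summing to zero annihilates the quadratic form of the squared distance matrix. -/
theorem not_affineIndependent_iff_exists_quadForm_eq_zero (m l : ℕ)
    (x : Fin l → EuclideanSpace ℝ (Fin m)) :
    ¬ AffineIndependent ℝ x ↔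
      ∃ lam : Fin l → ℝ, lam ≠ 0 ∧ ∑ i, lam i = 0 ∧
        ∑ i, ∑ j, lam i * lam j * ‖x i - x j‖ ^ 2 = 0 := by
  rw [not_affineIndependent_iff_exists_sum_smul_eq_zero]
  refine exists_congr fun lam => and_congr_right fun _ => and_congr_right fun hsum => ?_
  rw [sum_sum_mul_norm_sub_sq_of_sum_eq_zero x hsum]
  simp
end

section
/- Let X = {x₁, …, xₙ} be a finite metric space and let D be the n × n matrix with D_{ij} = d(xᵢ, xⱼ)². Then X embeds isometrically into a real Hilbert space if and only if for every Λ = (λ₁, …, λₙ) ∈ ℝⁿ with Σᵢ λᵢ = 0, we have Λ D Λᵀ ≤ 0. -/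
/-!
If `f` is an isometry into a Hilbert space and `∑ λᵢ = 0`, expanding
`d(i, j)² = ‖f i‖² + ‖f j‖² - 2⟪f i, f j⟫` kills the norm terms, so the quadratic form equals
`-2 ‖∑ λᵢ f i‖² ≤ 0`. Conversely, fix a base point `x₀` and polarize: the matrix
`Kᵢⱼ = (d(x₀, i)² + d(x₀, j)² - d(i, j)²) / 2` has vanishing row and column `x₀`, so the
sign condition on zero-sum vectors makes `K` positive semidefinite. Writing `K = Bᵀ B`, the
columns of `B`, placed on orthonormal vectors of `ℓ²`, have Gram matrix `K` and hence realize
the distances.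
-/

open Finset Matrix
open scoped MatrixOrder ComplexOrder

section QuadraticForms

variable {ι : Type*} [Fintype ι]

lemma sum_sum_mul_mul_eq_neg_two_mul {lam c : ι → ℝ} {d k : ι → ι → ℝ}
    (hlam : ∑ i, lam i = 0) (hd : ∀ i j, d i j = c i + c j - 2 * k i j) :
    ∑ i, ∑ j, lam i * lam j * d i j = -2 * ∑ i, ∑ j, lam i * lam j * k i j := by
  have hleft : ∑ i, ∑ j, lam i * lam j * c i = 0 := by
    simp_rw [mul_right_comm (lam _) (lam _) (c _), ← mul_sum, hlam, mul_zero, sum_const_zero]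
  have hright : ∑ i, ∑ j, lam i * lam j * c j = 0 := by
    simp_rw [mul_assoc (lam _) (lam _) (c _), ← mul_sum, ← sum_mul, hlam, zero_mul]
  simp only [hd, mul_sub, mul_add, sum_sub_distrib, sum_add_distrib, hleft, hright, mul_sum]
  simp_rw [mul_left_comm _ (2 : ℝ), ← mul_sum]
  ring

lemma star_dotProduct_mulVec_eq_sum_sum (K : Matrix ι ι ℝ) (x : ι → ℝ) :
    star x ⬝ᵥ K *ᵥ x = ∑ i, ∑ j, x i * x j * K i j := by
  simp only [dotProduct, mulVec, star_trivial, mul_sum]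
  exact sum_congr rfl fun i _ => sum_congr rfl fun j _ => by ring

lemma star_dotProduct_mulVec_add_of_mulVec_eq_zero {K : Matrix ι ι ℝ} (hK : K.IsSymm)
    {w : ι → ℝ} (hw : K *ᵥ w = 0) (x : ι → ℝ) :
    star (x + w) ⬝ᵥ K *ᵥ (x + w) = star x ⬝ᵥ K *ᵥ x := by
  rw [mulVec_add, hw, add_zero, star_trivial, star_trivial, add_dotProduct, dotProduct_mulVec w,
    ← mulVec_transpose, hK.eq, hw, zero_dotProduct, add_zero]

end QuadraticForms

theorem Isometry.sum_sum_mul_mul_dist_sq_nonpos {X E : Type*} [PseudoMetricSpace X] [Fintype X]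
    [SeminormedAddCommGroup E] [InnerProductSpace ℝ E] {f : X → E} (hf : Isometry f)
    (lam : X → ℝ) (hlam : ∑ i, lam i = 0) :
    ∑ i, ∑ j, lam i * lam j * dist i j ^ 2 ≤ 0 := by
  have hdist : ∀ i j, dist i j ^ 2 = ‖f i‖ ^ 2 + ‖f j‖ ^ 2 - 2 * gram ℝ f i j := fun i j => by
    rw [← hf.dist_eq, dist_eq_norm, norm_sub_sq_real, gram_apply]; ring
  rw [sum_sum_mul_mul_eq_neg_two_mul hlam hdist, ← star_dotProduct_mulVec_eq_sum_sum]
  have := (posSemidef_gram ℝ f).dotProduct_mulVec_nonneg lam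
  linarith

theorem Orthonormal.exists_gram_eq {𝕜 E ι : Type*} [RCLike 𝕜] [Fintype ι]
    [SeminormedAddCommGroup E] [InnerProductSpace 𝕜 E] {u : ι → E} (hu : Orthonormal 𝕜 u)
    {K : Matrix ι ι 𝕜} (hK : K.PosSemidef) : ∃ v : ι → E, gram 𝕜 v = K := by
  classical
  obtain ⟨B, rfl⟩ := CStarAlgebra.nonneg_iff_eq_star_mul_self.mp hK.nonneg
  refine ⟨fun j => ∑ k, B k j • u k, ext fun i j => ?_⟩
  rw [gram_apply, hu.inner_sum, star_eq_conjTranspose, mul_apply]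
  rfl

section SqDistGram

variable {X : Type*} [PseudoMetricSpace X]

/-- The Gram matrix that an isometric embedding sending `x₀` to the origin must have. -/
noncomputable def sqDistGram (x₀ : X) : Matrix X X ℝ :=
  of fun i j => (dist x₀ i ^ 2 + dist x₀ j ^ 2 - dist i j ^ 2) / 2

lemma dist_sq_eq_sqDistGram (x₀ i j : X) :
    dist i j ^ 2 = sqDistGram x₀ i i + sqDistGram x₀ j j - 2 * sqDistGram x₀ i j := by
  simp only [sqDistGram, of_apply, dist_self]; ring

lemma sqDistGram_isSymm (x₀ : X) : (sqDistGram x₀).IsSymm :=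
  ext fun i j => by simp only [sqDistGram, transpose_apply, of_apply, dist_comm, add_comm]

lemma sqDistGram_mulVec_single [Fintype X] [DecidableEq X] (x₀ : X) :
    sqDistGram x₀ *ᵥ Pi.single x₀ 1 = 0 := by
  ext i; simp [sqDistGram, mulVec_single, dist_comm]

theorem posSemidef_sqDistGram [Fintype X]
    (h : ∀ lam : X → ℝ, ∑ i, lam i = 0 → ∑ i, ∑ j, lam i * lam j * dist i j ^ 2 ≤ 0)
    (x₀ : X) : (sqDistGram x₀).PosSemidef := by
  classical
  refine .of_dotProduct_mulVec_nonneg (sqDistGram_isSymm x₀) fun x => ?_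
  -- Moving the total mass of `x` onto `x₀` gives a zero-sum vector with the same quadratic form.
  set lam := x - (∑ i, x i) • Pi.single x₀ 1
  have hlam : ∑ i, lam i = 0 := by simp [lam, sum_sub_distrib, ← mul_sum]
  have hx : x = lam + (∑ i, x i) • Pi.single x₀ 1 := by simp [lam]
  rw [hx, star_dotProduct_mulVec_add_of_mulVec_eq_zero (sqDistGram_isSymm x₀)
    (by rw [mulVec_smul, sqDistGram_mulVec_single, smul_zero]), star_dotProduct_mulVec_eq_sum_sum]
  have := h lam hlam
  rw [sum_sum_mul_mul_eq_neg_two_mul hlam (dist_sq_eq_sqDistGram x₀)] at this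
  linarith

theorem isometry_of_gram_eq_sqDistGram {E : Type*} [SeminormedAddCommGroup E]
    [InnerProductSpace ℝ E] {x₀ : X} {v : X → E} (hv : gram ℝ v = sqDistGram x₀) : Isometry v := by
  refine .of_dist_eq fun i j => ?_
  rw [← sq_eq_sq₀ dist_nonneg dist_nonneg, dist_eq_norm, norm_sub_sq_real,
    dist_sq_eq_sqDistGram x₀, ← hv]
  simp only [gram_apply, real_inner_self_eq_norm_sq]; ring

end SqDistGram

/-- Schoenberg's characterization: a finite metric space embeds isometrically into a
real Hilbert space iff its squared distance matrix is conditionally negative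
semidefinite. -/
theorem schoenberg_embedding_iff_negType (X : Type*) [MetricSpace X] [Fintype X] :
    (∃ f : X → lp (fun _ : ℕ => ℝ) 2, Isometry f) ↔
      ∀ lam : X → ℝ, ∑ i, lam i = 0 →
        ∑ i, ∑ j, lam i * lam j * dist i j ^ 2 ≤ 0 := by
  refine ⟨fun ⟨f, hf⟩ => hf.sum_sum_mul_mul_dist_sq_nonpos, fun h => ?_⟩
  rcases isEmpty_or_nonempty X with _ | ⟨⟨x₀⟩⟩
  · exact ⟨0, isometry_subsingleton⟩
  obtain ⟨e, he⟩ := Countable.exists_injective_nat X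
  have hu := (default : HilbertBasis ℕ ℝ (lp (fun _ : ℕ => ℝ) 2)).orthonormal.comp e he
  obtain ⟨v, hv⟩ := hu.exists_gram_eq (posSemidef_sqDistGram h x₀)
  exact ⟨v, isometry_of_gram_eq_sqDistGram hv⟩
end

section
/- Let X be an n-point subset of a real Hilbert space and let 0 < α < 1. Then the snowflake space X^α embeds isometrically into ℝ^{n-1}, and n-1 is the minimal such dimension: X^α embeds isometrically into ℝ^{n-1} but not into ℝ^{n-2}. -/
/-!
For `0 < α < 1` and `t ≥ 0` one has `t ^ α = C⁻¹ ∫₀^∞ (1 - e^{-tl}) l^{-1-α} dl` with `C > 0`.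
Hence, for weights `c ≠ 0` with `∑ cᵢ = 0`, the quadratic form `∑ cᵢcⱼ ‖xᵢ - xⱼ‖^{2α}` equals
`-C⁻¹ ∫₀^∞ (∑ cᵢcⱼ e^{-l‖xᵢ - xⱼ‖²}) l^{-1-α} dl`, which is negative because the Gaussian kernel is
strictly positive definite at distinct points. That in turn follows by expanding `exp ⟪zᵢ, zⱼ⟫` into
Hadamard powers of a Gram matrix (Schur) and separating the points by a linear functional that is
injective on them (Vandermonde).

So the squared snowflake distances are strictly conditionally negative definite. The weak
inequality is Schoenberg's criterion: the Gram matrix based at one point is positive semidefinite,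
and factoring it realises the `n` points in `ℝ^{n-1}`. The strict inequality says that any
realisation is affinely independent, which is impossible for `n` points in `ℝ^{n-2}`.
-/

open Finset Real Set Matrix MeasureTheory
open scoped RealInnerProductSpace ComplexOrder

namespace Matrix.PosSemidef

variable {ι 𝕜 : Type*} [Fintype ι] [RCLike 𝕜] {A : Matrix ι ι 𝕜}

theorem map_pow_s10 (hA : A.PosSemidef) (k : ℕ) : (A.map (· ^ k)).PosSemidef := by
  induction k with
  | zero =>
    convert posSemidef_vecMulVec_self_star (fun _ : ι => (1 : 𝕜))
    ext
    simp [vecMulVec]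
  | succ k ih =>
    convert ih.hadamard hA using 1
    ext
    simp [pow_succ]

theorem exists_eq_gram (hA : A.PosSemidef) : ∃ u : ι → EuclideanSpace 𝕜 ι, gram 𝕜 u = A := by
  classical
  open scoped MatrixOrder in
  obtain ⟨B, rfl⟩ := CStarAlgebra.nonneg_iff_eq_star_mul_self.mp hA.nonneg
  refine ⟨fun i => WithLp.toLp 2 fun t => B t i, ?_⟩
  ext i j
  simp [Matrix.mul_apply, PiLp.inner_apply, mul_comm]

end Matrix.PosSemidef

theorem eq_zero_of_forall_sum_mul_pow_eq_zero {ι R : Type*} [Fintype ι] [CommRing R] [IsDomain R]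
    {t a : ι → R} (ht : Function.Injective t) (h : ∀ k : ℕ, ∑ i, a i * t i ^ k = 0) : a = 0 := by
  set e := Fintype.equivFin ι
  have : a ∘ e.symm = 0 := Matrix.eq_zero_of_forall_pow_sum_mul_pow_eq_zero
    (ht.comp e.symm.injective) fun k => by simpa [← e.sum_comp] using h k
  ext i
  simpa using congrFun this (e i)

theorem setIntegral_pos_of_forall_pos {X : Type*} [MeasurableSpace X] {μ : Measure X} {s : Set X}
    {f : X → ℝ} (hs : MeasurableSet s) (hμs : μ s ≠ 0) (hf : IntegrableOn f s μ)
    (hpos : ∀ x ∈ s, 0 < f x) : 0 < ∫ x in s, f x ∂μ := by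
  refine (setIntegral_pos_iff_support_of_nonneg_ae ?_ hf).2 ?_
  · exact (ae_restrict_mem hs).mono fun x hx => (hpos x hx).le
  · rw [inter_eq_right.2 fun x hx => Function.mem_support.2 (hpos x hx).ne']
    exact pos_iff_ne_zero.2 hμs

section PositiveDefinite

variable {ι E : Type*} [NormedAddCommGroup E] [InnerProductSpace ℝ E]

theorem exists_inner_injective [Finite ι] {z : ι → E} (hz : Function.Injective z) :
    ∃ w : E, Function.Injective fun i => ⟪w, z i⟫ := by
  obtain ⟨w, hw⟩ := Module.Dual.exists_forall_ne_zero_of_forall_exists (K := ℝ)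
    (fun p : {p : ι × ι // p.1 ≠ p.2} => innerₛₗ ℝ (z p.1.1 - z p.1.2))
    fun p => ⟨z p.1.1 - z p.1.2, inner_self_ne_zero.2 (sub_ne_zero.2 (hz.ne p.2))⟩
  refine ⟨w, fun i j hij => by_contra fun hne => hw ⟨(i, j), hne⟩ ?_⟩
  simp [real_inner_comm w, hij]

variable [Fintype ι]

theorem sum_sum_mul_inner_pow_nonneg (z : ι → E) (a : ι → ℝ) (k : ℕ) :
    0 ≤ ∑ i, ∑ j, a i * a j * ⟪z i, z j⟫ ^ k := by
  simpa [dotProduct, mulVec, Finset.mul_sum, mul_assoc, mul_comm, mul_left_comm] using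
    ((posSemidef_gram ℝ z).map_pow_s10 k).dotProduct_mulVec_nonneg a

theorem sum_mul_inner_pow_eq_zero_of_sum_sum_eq_zero {z : ι → E} {a : ι → ℝ} {k : ℕ}
    (h : ∑ i, ∑ j, a i * a j * ⟪z i, z j⟫ ^ k = 0) (w : E) :
    ∑ j, a j * ⟪w, z j⟫ ^ k = 0 := by
  -- adjoin `w` with weight `0`: a positive semidefinite form vanishing at `b` annihilates `b`
  set p : Option ι → E := fun o => o.elim w z
  set b : Option ι → ℝ := fun o => o.elim 0 a
  have hM : (gram ℝ p).map (· ^ k) *ᵥ b = 0 := by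
    refine ((posSemidef_gram ℝ p).map_pow_s10 k).dotProduct_mulVec_zero_iff b |>.mp ?_
    simpa [dotProduct, mulVec, Fintype.sum_option, p, b, Finset.mul_sum, mul_assoc, mul_comm,
      mul_left_comm] using h
  simpa [mulVec, dotProduct, Fintype.sum_option, p, b, mul_comm] using congrFun hM none

theorem sum_sum_mul_exp_inner_pos {z : ι → E} (hz : Function.Injective z) {a : ι → ℝ}
    (ha : a ≠ 0) : 0 < ∑ i, ∑ j, a i * a j * exp ⟪z i, z j⟫ := by
  have hq := hasSum_sum fun i (_ : i ∈ Finset.univ) => hasSum_sum fun j (_ : j ∈ Finset.univ) =>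
    (NormedSpace.expSeries_div_hasSum_exp ⟪z i, z j⟫).mul_left (a i * a j)
  simp only [← Real.exp_eq_exp_ℝ, ← mul_div_assoc, ← Finset.sum_div] at hq
  have hq_nonneg (k : ℕ) : 0 ≤ (∑ i, ∑ j, a i * a j * ⟪z i, z j⟫ ^ k) / k.factorial :=
    div_nonneg (sum_sum_mul_inner_pow_nonneg z a k) k.factorial.cast_nonneg
  obtain ⟨k, hk⟩ : ∃ k : ℕ, ∑ i, ∑ j, a i * a j * ⟪z i, z j⟫ ^ k ≠ 0 := by
    by_contra! h
    obtain ⟨w, hw⟩ := exists_inner_injective hz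
    exact ha <| eq_zero_of_forall_sum_mul_pow_eq_zero hw fun k =>
      sum_mul_inner_pow_eq_zero_of_sum_sum_eq_zero (h k) w
  refine hasSum_lt (f := 0) hq_nonneg ((hq_nonneg k).lt_of_ne' ?_) hasSum_zero hq
  exact div_ne_zero hk (Nat.cast_ne_zero.2 k.factorial_ne_zero)

theorem sum_sum_mul_exp_neg_mul_norm_sub_sq_pos {y : ι → E} (hy : Function.Injective y)
    {b : ι → ℝ} (hb : b ≠ 0) {s : ℝ} (hs : 0 < s) :
    0 < ∑ i, ∑ j, b i * b j * exp (-(s * ‖y i - y j‖ ^ 2)) := by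
  set r := √(2 * s)
  have hr : r ≠ 0 := (sqrt_pos.2 (by positivity)).ne'
  have hrr : r * r = 2 * s := mul_self_sqrt (by positivity)
  have ha : (fun i => b i * exp (-(s * ‖y i‖ ^ 2))) ≠ 0 := fun h =>
    hb (funext fun i => by simpa [exp_ne_zero] using congrFun h i)
  convert sum_sum_mul_exp_inner_pos ((smul_right_injective E hr).comp hy) ha using 3 with i _ j _
  simp only [Function.comp_apply, real_inner_smul_left, real_inner_smul_right, ← mul_assoc, hrr]
  rw [norm_sub_sq_real, show -(s * (‖y i‖ ^ 2 - 2 * ⟪y i, y j⟫ + ‖y j‖ ^ 2))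
    = -(s * ‖y i‖ ^ 2) + -(s * ‖y j‖ ^ 2) + 2 * s * ⟪y i, y j⟫ by ring, exp_add, exp_add]
  ring

end PositiveDefinite

section Bernstein

variable {α : ℝ}

theorem integrableOn_one_sub_exp_mul_rpow (hα₀ : 0 < α) (hα₁ : α < 1) {t : ℝ} (ht : 0 ≤ t) :
    IntegrableOn (fun l => (1 - exp (-(t * l))) * l ^ (-1 - α)) (Ioi 0) := by
  have hmeas : AEStronglyMeasurable (fun l => (1 - exp (-(t * l))) * l ^ (-1 - α))
      (volume.restrict (Ioi 0)) := by
    refine ContinuousOn.aestronglyMeasurable ?_ measurableSet_Ioi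
    exact (by fun_prop : Continuous fun l => 1 - exp (-(t * l))).continuousOn.mul
      (continuousOn_id.rpow_const fun l hl => Or.inl (ne_of_gt hl))
  have hnonneg : ∀ l ∈ Ioi (0 : ℝ), 0 ≤ (1 - exp (-(t * l))) * l ^ (-1 - α) := fun l hl =>
    mul_nonneg (sub_nonneg.2 (exp_le_one_iff.2 (by nlinarith [mem_Ioi.1 hl])))
      (rpow_nonneg (le_of_lt hl) _)
  rw [← Ioc_union_Ioi_eq_Ioi zero_le_one]
  refine IntegrableOn.union ?_ ?_
  · have hint : IntegrableOn (fun l : ℝ => t * l ^ (-α)) (Ioc 0 1) := by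
      rw [integrableOn_Ioc_iff_integrableOn_Ioo]
      exact ((intervalIntegral.integrableOn_Ioo_rpow_iff zero_lt_one).2 (by linarith)).const_mul t
    refine hint.mono' (hmeas.mono_set Ioc_subset_Ioi_self) ?_
    filter_upwards [ae_restrict_mem measurableSet_Ioc] with l hl
    have hl₀ : 0 < l := hl.1
    rw [norm_of_nonneg (hnonneg l hl₀)]
    calc (1 - exp (-(t * l))) * l ^ (-1 - α) ≤ (t * l) * l ^ (-1 - α) := by
          gcongr
          linarith [add_one_le_exp (-(t * l))]
      _ = t * l ^ (-α) := by
          rw [mul_assoc, ← rpow_one_add' hl₀.le (by linarith)]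
          ring_nf
  · refine (integrableOn_Ioi_rpow_of_lt (a := -1 - α) (by linarith) zero_lt_one).mono'
      (hmeas.mono_set (Ioi_subset_Ioi zero_le_one)) ?_
    filter_upwards [ae_restrict_mem measurableSet_Ioi] with l hl
    have hl₀ : (0 : ℝ) < l := zero_lt_one.trans hl
    rw [norm_of_nonneg (hnonneg l hl₀)]
    exact mul_le_of_le_one_left (by positivity) (by linarith [exp_pos (-(t * l))])

theorem integral_one_sub_exp_mul_rpow (hα : α ≠ 0) {t : ℝ} (ht : 0 ≤ t) :
    ∫ l in Ioi 0, (1 - exp (-(t * l))) * l ^ (-1 - α)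
      = t ^ α * ∫ l in Ioi 0, (1 - exp (-l)) * l ^ (-1 - α) := by
  rcases ht.eq_or_lt with rfl | ht
  · simp [zero_rpow hα]
  have hscale : ∀ l ∈ Ioi (0 : ℝ), (1 - exp (-(t * l))) * l ^ (-1 - α)
      = t ^ (1 + α) * ((1 - exp (-(t * l))) * (t * l) ^ (-1 - α)) := fun l hl => by
    rw [mul_rpow ht.le (le_of_lt hl), mul_left_comm, ← mul_assoc (t ^ (1 + α)), ← rpow_add ht]
    simp
  rw [setIntegral_congr_fun measurableSet_Ioi hscale, integral_const_mul,
    integral_comp_mul_left_Ioi (fun u => (1 - exp (-u)) * u ^ (-1 - α)) 0 ht, mul_zero,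
    smul_eq_mul, ← mul_assoc, rpow_add ht, rpow_one]
  field_simp

theorem integral_one_sub_exp_mul_rpow_pos (hα₀ : 0 < α) (hα₁ : α < 1) :
    0 < ∫ l in Ioi 0, (1 - exp (-l)) * l ^ (-1 - α) := by
  refine setIntegral_pos_of_forall_pos measurableSet_Ioi (by simp)
    (by simpa using integrableOn_one_sub_exp_mul_rpow hα₀ hα₁ zero_le_one)
    fun l hl => mul_pos ?_ (rpow_pos_of_pos hl _)
  simpa using mem_Ioi.1 hl

end Bernstein

section NegativeDefinite

variable {ι E : Type*} [Fintype ι] [NormedAddCommGroup E] [InnerProductSpace ℝ E]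

def StrictCondNegDef (η : ι → ι → ℝ) : Prop :=
  ∀ c : ι → ℝ, c ≠ 0 → ∑ i, c i = 0 → ∑ i, ∑ j, c i * c j * η i j < 0

theorem strictCondNegDef_rpow_norm_sub_sq {y : ι → E} (hy : Function.Injective y) {α : ℝ}
    (hα₀ : 0 < α) (hα₁ : α < 1) : StrictCondNegDef fun i j => (‖y i - y j‖ ^ 2) ^ α := by
  intro c hc hsum
  have hint (i j : ι) := (integrableOn_one_sub_exp_mul_rpow hα₀ hα₁
    (sq_nonneg ‖y i - y j‖)).const_mul (c i * c j)
  set F : ℝ → ℝ := fun l =>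
    ∑ i, ∑ j, c i * c j * ((1 - exp (-(‖y i - y j‖ ^ 2 * l))) * l ^ (-1 - α))
  have hF_int : IntegrableOn F (Ioi 0) :=
    integrable_finsetSum _ fun i _ => integrable_finsetSum _ fun j _ => hint i j
  have hF_integral : ∫ l in Ioi 0, F l = (∑ i, ∑ j, c i * c j * (‖y i - y j‖ ^ 2) ^ α)
      * ∫ l in Ioi 0, (1 - exp (-l)) * l ^ (-1 - α) := by
    rw [integral_finsetSum _ fun i _ => integrable_finsetSum _ fun j _ => hint i j,
      Finset.sum_mul]
    refine Finset.sum_congr rfl fun i _ => ?_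
    rw [integral_finsetSum _ fun j _ => hint i j, Finset.sum_mul]
    refine Finset.sum_congr rfl fun j _ => ?_
    rw [integral_const_mul, integral_one_sub_exp_mul_rpow hα₀.ne' (sq_nonneg _)]
    ring
  -- since `∑ c = 0`, the constant part of `1 - exp` drops out and `-F` is a Gaussian form
  have hF_eq (l : ℝ) :
      -F l = (∑ i, ∑ j, c i * c j * exp (-(l * ‖y i - y j‖ ^ 2))) * l ^ (-1 - α) := by
    have hcc : ∑ i, ∑ j, c i * c j = 0 := by rw [← Finset.sum_mul_sum, hsum, zero_mul]
    calc -F l = (∑ i, ∑ j, c i * c j * exp (-(l * ‖y i - y j‖ ^ 2))) * l ^ (-1 - α)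
          - (∑ i, ∑ j, c i * c j) * l ^ (-1 - α) := by
          simp only [F, Finset.sum_mul, ← Finset.sum_sub_distrib, ← Finset.sum_neg_distrib]
          refine Finset.sum_congr rfl fun i _ => Finset.sum_congr rfl fun j _ => ?_
          rw [mul_comm l]
          ring
      _ = _ := by rw [hcc, zero_mul, sub_zero]
  have hgauss : 0 < ∫ l in Ioi 0, -F l := by
    refine setIntegral_pos_of_forall_pos measurableSet_Ioi (by simp) hF_int.neg fun l hl => ?_
    rw [hF_eq]
    exact mul_pos (sum_sum_mul_exp_neg_mul_norm_sub_sq_pos hy hc hl) (rpow_pos_of_pos hl _)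
  rw [integral_neg, hF_integral] at hgauss
  exact neg_of_mul_neg_left (neg_pos.1 hgauss) (integral_one_sub_exp_mul_rpow_pos hα₀ hα₁).le

theorem sum_sum_mul_norm_sub_sq (f : ι → E) {c : ι → ℝ} (hc : ∑ i, c i = 0) :
    ∑ i, ∑ j, c i * c j * ‖f i - f j‖ ^ 2 = -2 * ‖∑ i, c i • f i‖ ^ 2 := by
  have h₁ : ∑ i, ∑ j, c i * c j * ‖f i‖ ^ 2 = 0 := by
    simp [mul_right_comm _ _ (‖_‖ ^ 2), ← Finset.mul_sum, hc]
  have h₂ : ∑ i, ∑ j, c i * c j * ‖f j‖ ^ 2 = 0 := by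
    simp [mul_assoc, ← Finset.mul_sum, ← Finset.sum_mul, hc]
  have h₃ : ‖∑ i, c i • f i‖ ^ 2 = ∑ i, ∑ j, c i * c j * ⟪f i, f j⟫ := by
    rw [← real_inner_self_eq_norm_sq, sum_inner]
    refine Finset.sum_congr rfl fun i _ => ?_
    rw [inner_sum]
    refine Finset.sum_congr rfl fun j _ => ?_
    rw [real_inner_smul_left, real_inner_smul_right, mul_assoc]
  simp only [norm_sub_sq_real, mul_add, mul_sub, Finset.sum_add_distrib, Finset.sum_sub_distrib,
    h₁, h₂, h₃, Finset.mul_sum, zero_sub, add_zero, ← Finset.sum_neg_distrib]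
  exact Finset.sum_congr rfl fun i _ => Finset.sum_congr rfl fun j _ => by ring

theorem affineIndependent_of_strictCondNegDef {f : ι → E}
    (h : StrictCondNegDef fun i j => ‖f i - f j‖ ^ 2) : AffineIndependent ℝ f := by
  rw [affineIndependent_iff_of_fintype]
  intro c hc hf
  refine fun i => congrFun (?_ : c = 0) i
  by_contra hc₀
  have := h c hc₀ hc
  rw [sum_sum_mul_norm_sub_sq f hc, ← weightedVSub_eq_linear_combination _ hc, hf] at this
  simp at this

end NegativeDefinite

section Schoenberg

variable {m : ℕ}

/-- If `η i j = ‖p i - p j‖ ^ 2`, then `basedGram η k l = ⟪p k.succ - p 0, p l.succ - p 0⟫`. -/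
noncomputable def basedGram (η : Fin (m + 1) → Fin (m + 1) → ℝ) : Matrix (Fin m) (Fin m) ℝ :=
  Matrix.of fun k l => (η k.succ 0 + η l.succ 0 - η k.succ l.succ) / 2

theorem sum_sum_cons_mul_eq_basedGram {η : Fin (m + 1) → Fin (m + 1) → ℝ}
    (hsymm : ∀ i j, η i j = η j i) (hdiag : η 0 0 = 0) (v : Fin m → ℝ) :
    ∑ i, ∑ j, (Fin.cons (-∑ k, v k) v : Fin (m + 1) → ℝ) i
        * (Fin.cons (-∑ k, v k) v : Fin (m + 1) → ℝ) j * η i j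
      = -2 * (v ⬝ᵥ basedGram η *ᵥ v) := by
  set s := ∑ k, v k
  set b := ∑ k, v k * η k.succ 0
  have h₁ : ∑ k, ∑ l, v k * v l * η k.succ 0 = b * s := by
    simp only [b, s, Finset.sum_mul_sum, mul_right_comm]
  have h₂ : ∑ k, ∑ l, v k * v l * η l.succ 0 = s * b := by
    simp only [b, s, Finset.sum_mul_sum, mul_assoc]
  have h₃ : ∑ k, v k * -s * η k.succ 0 = -(s * b) := by
    simp only [b, Finset.mul_sum, ← Finset.sum_neg_distrib]
    exact Finset.sum_congr rfl fun k _ => by ring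
  have h₄ : ∑ k, -s * v k * η k.succ 0 = -(s * b) := by
    simp only [b, Finset.mul_sum, ← Finset.sum_neg_distrib]
    exact Finset.sum_congr rfl fun k _ => by ring
  have h₅ : v ⬝ᵥ basedGram η *ᵥ v = (∑ k, ∑ l, v k * v l * η k.succ 0
      + ∑ k, ∑ l, v k * v l * η l.succ 0 - ∑ k, ∑ l, v k * v l * η k.succ l.succ) / 2 := by
    simp only [dotProduct, mulVec, basedGram, Matrix.of_apply, Finset.mul_sum,
      ← Finset.sum_add_distrib, ← Finset.sum_sub_distrib, Finset.sum_div]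
    exact Finset.sum_congr rfl fun k _ => Finset.sum_congr rfl fun l _ => by ring
  simp only [Fin.sum_univ_succ, Fin.cons_zero, Fin.cons_succ, hdiag, hsymm 0, mul_zero, zero_add,
    Finset.sum_add_distrib, h₁, h₂, h₃, h₄, h₅]
  ring

theorem exists_euclideanSpace_sq_dist_eq (η : Fin (m + 1) → Fin (m + 1) → ℝ)
    (hsymm : ∀ i j, η i j = η j i) (hdiag : ∀ i, η i i = 0)
    (hη : ∀ c : Fin (m + 1) → ℝ, ∑ i, c i = 0 → ∑ i, ∑ j, c i * c j * η i j ≤ 0) :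
    ∃ f : Fin (m + 1) → EuclideanSpace ℝ (Fin m), ∀ i j, ‖f i - f j‖ ^ 2 = η i j := by
  have hG : (basedGram η).PosSemidef := by
    refine .of_dotProduct_mulVec_nonneg ?_ fun v => ?_
    · ext k l
      simp only [basedGram, conjTranspose_apply, Matrix.of_apply, star_trivial,
        hsymm k.succ l.succ]
      ring
    · have := hη (Fin.cons (-∑ k, v k) v) (by simp [Fin.sum_cons])
      rw [sum_sum_cons_mul_eq_basedGram hsymm (hdiag 0)] at this
      simpa using this
  obtain ⟨u, hu⟩ := hG.exists_eq_gram
  set f : Fin (m + 1) → EuclideanSpace ℝ (Fin m) := Fin.cons 0 u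
  have hinner (i j : Fin (m + 1)) : ⟪f i, f j⟫ = (η i 0 + η j 0 - η i j) / 2 := by
    induction i using Fin.cases <;> induction j using Fin.cases
    · simp [f, hdiag]
    · simp [f, hdiag, hsymm 0]
    · simp [f, hdiag]
    · simpa [f, basedGram] using congrFun (congrFun hu _) _
  refine ⟨f, fun i j => ?_⟩
  rw [norm_sub_sq_real, ← real_inner_self_eq_norm_sq, ← real_inner_self_eq_norm_sq, hinner,
    hinner, hinner, hdiag, hdiag]
  ring

end Schoenberg

theorem snowflake_embeds_optimal_dimension_general {H : Type*} [NormedAddCommGroup H]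
    [InnerProductSpace ℝ H]
    (n : ℕ) (hn : 2 ≤ n) (x : Fin n → H) (hx : Function.Injective x)
    (α : ℝ) (hα₀ : 0 < α) (hα₁ : α < 1) :
    (∃ f : Fin n → EuclideanSpace ℝ (Fin (n - 1)),
      ∀ i j, ‖f i - f j‖ = ‖x i - x j‖ ^ α) ∧
    ¬ (∃ f : Fin n → EuclideanSpace ℝ (Fin (n - 2)),
      ∀ i j, ‖f i - f j‖ = ‖x i - x j‖ ^ α) := by
  obtain ⟨m, rfl⟩ : ∃ m, n = m + 2 := ⟨n - 2, by omega⟩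
  have hη : StrictCondNegDef fun i j => (‖x i - x j‖ ^ α) ^ 2 := by
    simpa only [rpow_pow_comm (norm_nonneg _)] using strictCondNegDef_rpow_norm_sub_sq hx hα₀ hα₁
  constructor
  · obtain ⟨f, hf⟩ := exists_euclideanSpace_sq_dist_eq (fun i j => (‖x i - x j‖ ^ α) ^ 2)
      (fun i j => by rw [norm_sub_rev]) (fun i => by simp [zero_rpow hα₀.ne'])
      fun c hc => (eq_or_ne c 0).elim (fun h => by simp [h]) fun h => (hη c h hc).le
    exact ⟨f, fun i j => (sq_eq_sq₀ (norm_nonneg _) (by positivity)).1 (hf i j)⟩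
  · rintro ⟨f, hf⟩
    have hf_indep := affineIndependent_of_strictCondNegDef (f := f) (by simpa only [hf] using hη)
    have := hf_indep.card_le_finrank_succ.trans
      (Nat.add_le_add_right (Submodule.finrank_le (vectorSpan ℝ (range f))) 1)
    simp at this

/-- An `n`-point subset of a Hilbert space snowflaked with exponent `0 < α < 1`
embeds isometrically into `ℝ^(n-1)`, and this dimension is optimal: it does not
embed isometrically into `ℝ^(n-2)`. -/
theorem snowflake_embeds_optimal_dimension {H : Type*} [NormedAddCommGroup H]
    [InnerProductSpace ℝ H] [CompleteSpace H]
    (n : ℕ) (hn : 2 ≤ n) (x : Fin n → H) (hx : Function.Injective x)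
    (α : ℝ) (hα₀ : 0 < α) (hα₁ : α < 1) :
    (∃ f : Fin n → EuclideanSpace ℝ (Fin (n - 1)),
      ∀ i j, ‖f i - f j‖ = ‖x i - x j‖ ^ α) ∧
    ¬ (∃ f : Fin n → EuclideanSpace ℝ (Fin (n - 2)),
      ∀ i j, ‖f i - f j‖ = ‖x i - x j‖ ^ α) :=
  snowflake_embeds_optimal_dimension_general n hn x hx α hα₀ hα₁
end

section
/- Let x₁, …, xₙ be distinct points in a real inner product space and suppose that for some vector Λ = (λ₁, …, λₙ) with Σᵢλᵢ = 0 and for every λ > 0 we have Σ_{i,j} λᵢλⱼ e^{-λ²‖xᵢ-xⱼ‖²} = 0. Then for every 0 < α < 1, Σ_{i,j} λᵢλⱼ ‖xᵢ-xⱼ‖^{2α} = 0, and moreover Σ_{i≠j} λᵢλⱼ = 0, which forces Λ = 0. -/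
/-!
At distinct points the Gaussian kernel `exp (-l² ‖xᵢ - xⱼ‖²)` tends, as `l → ∞`, to the identity
matrix, so the Gaussian quadratic form of `Λ` tends to `∑ λᵢ²`. If the form vanishes for every
`l > 0`, then `Λ = 0`, and every other quadratic form in `Λ` vanishes with it.
-/

open Finset Filter Topology

theorem tendsto_exp_neg_sq_mul_atTop {c : ℝ} (hc : 0 < c) :
    Tendsto (fun l : ℝ => Real.exp (-(l ^ 2) * c)) atTop (𝓝 0) := by
  have hsq : Tendsto (fun l : ℝ => l ^ 2 * c) atTop atTop :=
    (tendsto_pow_atTop two_ne_zero).atTop_mul_const hc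
  simpa only [neg_mul, Function.comp_def] using
    Real.tendsto_exp_atBot.comp (tendsto_neg_atTop_atBot.comp hsq)

section GaussianForm

variable {ι E : Type*} [DecidableEq ι] [NormedAddCommGroup E] {x : ι → E}

theorem tendsto_gaussian_kernel_atTop (hx : Function.Injective x) (i j : ι) :
    Tendsto (fun l : ℝ => Real.exp (-(l ^ 2) * ‖x i - x j‖ ^ 2)) atTop
      (𝓝 (if i = j then 1 else 0)) := by
  by_cases hij : i = j
  · subst hij
    simp
  · have hdist : 0 < ‖x i - x j‖ ^ 2 := by
      have : x i - x j ≠ 0 := sub_ne_zero.mpr (hx.ne hij)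
      positivity
    simpa [hij] using tendsto_exp_neg_sq_mul_atTop hdist

theorem tendsto_gaussian_form_atTop [Fintype ι] (hx : Function.Injective x) (lam : ι → ℝ) :
    Tendsto (fun l : ℝ => ∑ i, ∑ j, lam i * lam j * Real.exp (-(l ^ 2) * ‖x i - x j‖ ^ 2))
      atTop (𝓝 (∑ i, lam i ^ 2)) := by
  have hlim := tendsto_finsetSum univ fun i _ => tendsto_finsetSum univ fun j _ =>
    (tendsto_gaussian_kernel_atTop hx i j).const_mul (lam i * lam j)
  simpa [sq] using hlim

theorem eq_zero_of_gaussian_form_eq_zero [Fintype ι] (hx : Function.Injective x) {lam : ι → ℝ}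
    (hvanish : ∀ l : ℝ, 0 < l →
      ∑ i, ∑ j, lam i * lam j * Real.exp (-(l ^ 2) * ‖x i - x j‖ ^ 2) = 0) :
    lam = 0 := by
  have hzero : Tendsto (fun l : ℝ => ∑ i, ∑ j, lam i * lam j *
      Real.exp (-(l ^ 2) * ‖x i - x j‖ ^ 2)) atTop (𝓝 0) :=
    tendsto_const_nhds.congr' <| (eventually_gt_atTop 0).mono fun l hl => (hvanish l hl).symm
  have hsq : ∑ i, lam i ^ 2 = 0 := tendsto_nhds_unique (tendsto_gaussian_form_atTop hx lam) hzero
  funext i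
  exact pow_eq_zero_iff two_ne_zero |>.mp <|
    congrFun ((Fintype.sum_eq_zero_iff_of_nonneg fun j => sq_nonneg (lam j)).mp hsq) i

end GaussianForm

theorem gaussian_vanishing_forces_zero_general {E : Type*} [NormedAddCommGroup E]
    (n : ℕ) (x : Fin n → E) (hx : Function.Injective x)
    (lam : Fin n → ℝ)
    (hvanish : ∀ l : ℝ, 0 < l →
      ∑ i, ∑ j, lam i * lam j * Real.exp (-(l ^ 2) * ‖x i - x j‖ ^ 2) = 0) :
    (∀ α : ℝ, 0 < α → α < 1 → ∑ i, ∑ j, lam i * lam j * ‖x i - x j‖ ^ (2 * α) = 0) ∧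
    (∑ i, ∑ j, lam i * lam j * (if i = j then (0 : ℝ) else 1)) = 0 ∧
    lam = 0 := by
  obtain rfl := eq_zero_of_gaussian_form_eq_zero hx hvanish
  exact ⟨fun _ _ _ => by simp, by simp, rfl⟩

/-- Core step of strict negative type: if the Gaussian quadratic form vanishes for all
`λ > 0` at distinct points with coefficients summing to zero, then all snowflaked
quadratic forms vanish, the simplex form vanishes, and the coefficients are zero. -/
theorem gaussian_vanishing_forces_zero {E : Type*} [NormedAddCommGroup E]
    [InnerProductSpace ℝ E] (n : ℕ) (x : Fin n → E) (hx : Function.Injective x)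
    (lam : Fin n → ℝ) (hsum : ∑ i, lam i = 0)
    (hvanish : ∀ l : ℝ, 0 < l →
      ∑ i, ∑ j, lam i * lam j * Real.exp (-(l ^ 2) * ‖x i - x j‖ ^ 2) = 0) :
    (∀ α : ℝ, 0 < α → α < 1 → ∑ i, ∑ j, lam i * lam j * ‖x i - x j‖ ^ (2 * α) = 0) ∧
    (∑ i, ∑ j, lam i * lam j * (if i = j then (0 : ℝ) else 1)) = 0 ∧
    lam = 0 :=
  gaussian_vanishing_forces_zero_general n x hx lam hvanish
end
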